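/- arXiv:1208.1203 — 3 statements merged into one kernel-verified Lean document; each statement's English description precedes it below -/
import Mathlib

section
/- Let (a_{kj})_{k,j∈ℕ} be an infinite hermitian matrix of complex numbers (i.e. a_{jk} = conj(a_{kj})) such that for every j the column {a_{kj}}_{k≥1} is square-summable, and such that lim_{m→∞} ( sup_{j≥m} Σ_{k≥m} |a_{jk}| ) = 0. Then (a_{kj}) defines a compact self-adjoint operator on ℓ²(ℕ); that is, there exists a compact self-adjoint operator A on ℓ²(ℕ) with ⟨A x, y⟩ = Σ_{k,j} a_{kj} x_k conj(y_j) for all x, y ∈ ℓ²(ℕ). -/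
open MeasureTheory Filter
open scoped ComplexOrder ENNReal RealInnerProductSpace

noncomputable section

/-- The Hilbert space `ℓ²(ℕ)` of square-summable complex sequences. -/
abbrev ell2 : Type := lp (fun _ : ℕ => ℂ) 2

/-- The standard basis vector `e k` of `ℓ²(ℕ)`. -/
def stdBasis (k : ℕ) : ell2 := lp.single 2 k (1 : ℂ)

/-- A sequence in a normed space is a *Riesz–Fischer sequence* if there is `c > 0` with
`‖∑_{k<m} ξ_k f_k‖² ≥ c ∑_{k<m} |ξ_k|²` for all `m` and all coefficients `ξ`. -/
def IsRieszFischerSeq {F : Type*} [NormedAddCommGroup F] [NormedSpace ℂ F] (f : ℕ → F) : Prop :=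
  ∃ c : ℝ, 0 < c ∧ ∀ (m : ℕ) (ξ : Fin m → ℂ),
    c * ∑ k, ‖ξ k‖ ^ 2 ≤ ‖∑ k, ξ k • f (k : ℕ)‖ ^ 2

/-- A sequence in a normed space is a *Bessel sequence* if there is `C > 0` with
`‖∑_{k<m} ξ_k f_k‖² ≤ C ∑_{k<m} |ξ_k|²` for all `m` and all coefficients `ξ`. -/
def IsBesselSeq {F : Type*} [NormedAddCommGroup F] [NormedSpace ℂ F] (f : ℕ → F) : Prop :=
  ∃ C : ℝ, 0 < C ∧ ∀ (m : ℕ) (ξ : Fin m → ℂ),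
    ‖∑ k, ξ k • f (k : ℕ)‖ ^ 2 ≤ C * ∑ k, ‖ξ k‖ ^ 2

/-- `g` is *strongly `X`-positive definite*: there is `c > 0` such that for every finite
choice of distinct points from (the range of) `X` and all complex coefficients `ξ`,
`∑_{j,k} ξ_k conj(ξ_j) g(y_k − y_j) ≥ c ∑_k |ξ_k|²` (inequality in the complex order). -/
def IsStronglyPosDef {E : Type*} [NormedAddCommGroup E] (X : ℕ → E) (g : E → ℂ) : Prop :=
  ∃ c : ℝ, 0 < c ∧ ∀ (m : ℕ) (y : Fin m → E),
    (∀ i, y i ∈ Set.range X) → Function.Injective y → ∀ ξ : Fin m → ℂ,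
      ((c * ∑ k, ‖ξ k‖ ^ 2 : ℝ) : ℂ) ≤ ∑ j, ∑ k, ξ k * (starRingEnd ℂ) (ξ j) * g (y k - y j)

/-- `g` is a *positive definite function*: it is continuous at `0` and all quadratic forms
`∑_{j,k} ξ_k conj(ξ_j) g(x_k − x_j)` are nonnegative (in the complex order). -/
def IsPosDefFn {E : Type*} [NormedAddCommGroup E] (g : E → ℂ) : Prop :=
  ContinuousAt g 0 ∧ ∀ (m : ℕ) (x : Fin m → E) (ξ : Fin m → ℂ),
    (0 : ℂ)≤ ∑ j, ∑ k, ξ k * (starRingEnd ℂ) (ξ j) * g (x k - x j)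

/-- `d_*(X) > 0`: the points of the sequence `X` are uniformly separated. -/
def SeparatedSeq {E : Type*} [MetricSpace E] (X : ℕ → E) : Prop :=
  ∃ d : ℝ, 0 < d ∧ ∀ k j, k ≠ j → d ≤ dist (X k) (X j)

/-- The upper density `D*(Λ)` of a real sequence: the (limsup form of the) limit of
`n(r)/r`, where `n(r)` is the largest number of terms of `Λ` lying in an interval
of length `r`. -/
def upperDensity (Λ : ℕ → ℝ) : ℝ≥0∞ :=
  Filter.limsup (fun r : ℝ =>
    (⨆ a : ℝ, ∑' _ : {k : ℕ // Λ k ∈ Set.Icc a (a + r)}, (1 : ℝ≥0∞)) / ENNReal.ofReal r)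
    Filter.atTop

namespace Stmt12

def R1 (u v : ell2) : ell2 →L[ℂ] ell2 := (innerSL ℂ u).smulRight v

lemma R1_apply (u v x : ell2) : R1 u v x = (inner ℂ u x : ℂ) • v := rfl

lemma isCompact_R1 (u v : ell2) : IsCompactOperator (R1 u v) := by
  refine ⟨(fun c : ℂ => c • v) '' Metric.closedBall 0 ‖u‖, ?_, ?_⟩
  · exact ((isCompact_closedBall 0 ‖u‖).image (continuous_id.smul continuous_const))
  · refine Filter.mem_of_superset (Metric.ball_mem_nhds 0 one_pos) ?_
    intro x hx
    refine ⟨inner ℂ u x, ?_, rfl⟩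
    simp only [Metric.mem_closedBall, dist_zero_right]
    calc ‖(inner ℂ u x : ℂ)‖ ≤ ‖u‖ * ‖x‖ := norm_inner_le_norm u x
      _ ≤ ‖u‖ * 1 := by
          have hx1 : ‖x‖ ≤ 1 := le_of_lt (by simpa using hx)
          gcongr
      _ = ‖u‖ := mul_one _

variable (a : ℕ → ℕ → ℂ)

lemma conj2 : Real.HolderConjugate (2:ℝ≥0∞).toReal (2:ℝ≥0∞).toReal := by
  rw [ENNReal.toReal_ofNat]
  constructor <;> norm_num

def rowVec (hrow : ∀ j, Memℓp (fun k => a j k) 2) (j : ℕ) : ell2 :=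
  ⟨(fun k => a j k), hrow j⟩

lemma rowVec_apply (hrow : ∀ j, Memℓp (fun k => a j k) 2) (j k : ℕ) :
    (rowVec a hrow j : ∀ _ : ℕ, ℂ) k = a j k := rfl

lemma stdBasis_apply (k i : ℕ) : (stdBasis k : ∀ _ : ℕ, ℂ) i = if i = k then 1 else 0 := by
  rw [stdBasis, lp.single_apply]
  split_ifs with h <;> simp [h]

def bmat (p k j : ℕ) : ℂ := if k < p ∨ j < p then a k j else 0

def opA (hrow : ∀ j, Memℓp (fun k => a j k) 2) (p : ℕ) : ell2 →L[ℂ] ell2 :=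
  (∑ j ∈ Finset.range p, R1 (rowVec a hrow j) (stdBasis j)) +
  (∑ k ∈ Finset.range p, R1 (stdBasis k) (rowVec a hrow k)) -
  ∑ k ∈ Finset.range p, ∑ j ∈ Finset.range p, a k j • R1 (stdBasis k) (stdBasis j)

variable (hherm : ∀ k j, a j k = (starRingEnd ℂ) (a k j))
variable (hrow : ∀ j, Memℓp (fun k => a j k) 2)

lemma inner_stdBasis_left (k : ℕ) (x : ell2) : (inner ℂ (stdBasis k) x : ℂ) = x k := by
  simpa [stdBasis, RCLike.inner_apply] using lp.inner_single_left (𝕜 := ℂ) k (1:ℂ) x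

include hherm in
lemma inner_rowVec_left (j : ℕ) (x : ell2) :
    (inner ℂ (rowVec a hrow j) x : ℂ) = ∑' k, a k j * x k := by
  rw [lp.inner_eq_tsum]
  refine tsum_congr fun k => ?_
  rw [RCLike.inner_apply, rowVec_apply, hherm k j, Complex.conj_conj, mul_comm]

include hherm hrow in
lemma summable_row_mul (j : ℕ) (x : ell2) : Summable fun k => a k j * x k := by
  have := lp.summable_inner (𝕜 := ℂ) (rowVec a hrow j) x
  refine this.congr fun k => ?_
  rw [RCLike.inner_apply, rowVec_apply, hherm k j, Complex.conj_conj, mul_comm]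

include hherm hrow in
lemma summable_norm_row_mul (j : ℕ) (x : ell2) :
    Summable fun k => ‖a k j‖ * ‖(x : ∀ _ : ℕ, ℂ) k‖ := by
  have := lp.summable_mul (conj2) (rowVec a hrow j) x
  refine this.congr fun k => ?_
  rw [rowVec_apply, hherm k j, RCLike.norm_conj]

include hherm hrow in
lemma summable_bmul (p j : ℕ) (x : ell2) :
    Summable fun k => bmat a p k j * x k := by
  refine Summable.of_norm_bounded (summable_norm_row_mul a hherm hrow j x) fun k => ?_
  rw [norm_mul, bmat]
  split_ifs with h
  · exact le_refl _
  · simp [mul_nonneg, norm_nonneg]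
include hherm in
lemma opA_apply (p : ℕ) (x : ell2) (j : ℕ) :
    (opA a hrow p x : ∀ _ : ℕ, ℂ) j = ∑' k, bmat a p k j * x k := by
  have hstep : (opA a hrow p x : ∀ _ : ℕ, ℂ) j =
      (if j < p then (inner ℂ (rowVec a hrow j) x : ℂ) else 0)
      + (∑ k ∈ Finset.range p, (x : ∀ _ : ℕ, ℂ) k * a k j)
      - (if j < p then ∑ k ∈ Finset.range p, a k j * x k else 0) := by
    rw [opA, ContinuousLinearMap.sub_apply, ContinuousLinearMap.add_apply]
    simp only [ContinuousLinearMap.sum_apply, R1_apply, ContinuousLinearMap.smul_apply]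
    rw [lp.coeFn_sub, Pi.sub_apply, lp.coeFn_add, Pi.add_apply]
    rw [lp.coeFn_sum, Finset.sum_apply, lp.coeFn_sum, Finset.sum_apply,
      lp.coeFn_sum, Finset.sum_apply]
    congr 1
    · congr 1
      · simp only [lp.coeFn_smul, Pi.smul_apply, stdBasis_apply, smul_eq_mul, mul_ite,
          mul_one, mul_zero]
        rw [Finset.sum_ite_eq (Finset.range p) j fun j' => (inner ℂ (rowVec a hrow j') x : ℂ)]
        simp [Finset.mem_range]
      · refine Finset.sum_congr rfl fun k _ => ?_
        simp [lp.coeFn_smul, Pi.smul_apply, rowVec_apply, inner_stdBasis_left, smul_eq_mul]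
    · have hF : ∀ k ∈ Finset.range p,
          ((∑ j' ∈ Finset.range p, a k j' • ((inner ℂ (stdBasis k) x : ℂ) • stdBasis j')
            : ell2) : ∀ _ : ℕ, ℂ) j = if j < p then a k j * (x : ∀ _ : ℕ, ℂ) k else 0 := by
        intro k _
        rw [lp.coeFn_sum, Finset.sum_apply]
        simp only [lp.coeFn_smul, Pi.smul_apply, stdBasis_apply,
          inner_stdBasis_left, smul_eq_mul, mul_ite, mul_one, mul_zero]
        rw [Finset.sum_ite_eq (Finset.range p) j fun j' => a k j' * (x : ∀ _ : ℕ, ℂ) k]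
        simp [Finset.mem_range]
      rw [Finset.sum_congr rfl hF]
      split_ifs with hjp
      · rfl
      · simp
  rw [hstep]
  by_cases hj : j < p
  · rw [show (∑' k, bmat a p k j * (x : ∀ _ : ℕ, ℂ) k) = ∑' k, a k j * x k from
      tsum_congr fun k => by rw [bmat, if_pos (Or.inr hj)]]
    rw [if_pos hj, if_pos hj, inner_rowVec_left a hherm hrow j x]
    rw [show (∑ k ∈ Finset.range p, (x : ∀ _ : ℕ, ℂ) k * a k j)
        = ∑ k ∈ Finset.range p, a k j * x k from
      Finset.sum_congr rfl fun k _ => mul_comm _ _]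
    rw [add_sub_cancel_right]
  · rw [if_neg hj, if_neg hj]
    have h2 : ∑' k, bmat a p k j * x k = ∑ k ∈ Finset.range p, bmat a p k j * x k := by
      refine tsum_eq_sum fun k hk => ?_
      have hns : ¬ (k < p ∨ j < p) := by
        push_neg
        exact ⟨not_lt.mp (by simpa [Finset.mem_range] using hk), not_lt.mp hj⟩
      rw [bmat, if_neg hns, zero_mul]
    rw [h2]
    simp only [zero_add, sub_zero]
    refine Finset.sum_congr rfl fun k hk => ?_
    rw [bmat, if_pos (Or.inl (Finset.mem_range.mp hk)), mul_comm]

include hherm in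
lemma opA_entry (p k j : ℕ) :
    (opA a hrow p (stdBasis k) : ∀ _ : ℕ, ℂ) j = bmat a p k j := by
  rw [opA_apply a hherm hrow p (stdBasis k) j]
  rw [tsum_eq_single k (fun k' hk' => by
    rw [stdBasis_apply, if_neg hk', mul_zero])]
  rw [stdBasis_apply, if_pos rfl, mul_one]

lemma star_R1' (u v : ell2) : star (R1 u v) = R1 v u := by
  rw [ContinuousLinearMap.star_eq_adjoint, eq_comm, ContinuousLinearMap.eq_adjoint_iff]
  intro x y
  simp only [R1_apply, inner_smul_left, inner_smul_right, inner_conj_symm]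
  ring

include hherm in
lemma opA_selfAdjoint (p : ℕ) : IsSelfAdjoint (opA a hrow p) := by
  rw [IsSelfAdjoint, opA]
  rw [star_sub, star_add, star_sum, star_sum, star_sum]
  have h1 : ∀ j ∈ Finset.range p,
      star (R1 (rowVec a hrow j) (stdBasis j)) = R1 (stdBasis j) (rowVec a hrow j) :=
    fun j _ => star_R1' _ _
  have h2 : ∀ k ∈ Finset.range p,
      star (R1 (stdBasis k) (rowVec a hrow k)) = R1 (rowVec a hrow k) (stdBasis k) :=
    fun k _ => star_R1' _ _
  rw [Finset.sum_congr rfl h1, Finset.sum_congr rfl h2]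
  have h3 : ∀ k ∈ Finset.range p,
      star (∑ j ∈ Finset.range p, a k j • R1 (stdBasis k) (stdBasis j))
      = ∑ j ∈ Finset.range p, (starRingEnd ℂ) (a k j) • R1 (stdBasis j) (stdBasis k) := by
    intro k _
    rw [star_sum]
    refine Finset.sum_congr rfl fun j _ => ?_
    rw [star_smul, star_R1']
    rfl
  rw [Finset.sum_congr rfl h3, Finset.sum_comm]
  have h4 : ∀ j ∈ Finset.range p, ∀ k ∈ Finset.range p,
      (starRingEnd ℂ) (a k j) • R1 (stdBasis j) (stdBasis k)
      = a j k • R1 (stdBasis j) (stdBasis k) := by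
    intro j _ k _
    rw [← hherm k j]
  rw [Finset.sum_congr rfl fun j hj => Finset.sum_congr rfl (h4 j hj)]
  rw [add_comm]

lemma opA_compact (p : ℕ) : IsCompactOperator (opA a hrow p) := by
  have : opA a hrow p ∈ compactOperator (RingHom.id ℂ) ell2 ell2 := by
    refine sub_mem (add_mem ?_ ?_) ?_
    · exact sum_mem fun j _ => isCompact_R1 _ _
    · exact sum_mem fun k _ => isCompact_R1 _ _
    · exact sum_mem fun k _ => sum_mem fun j _ => Submodule.smul_mem _ _ (isCompact_R1 _ _)
  exact this


lemma ennreal_cs (N X : ℕ → ℝ≥0∞) :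
    (∑' k, N k * X k) ^ 2 ≤ (∑' k, N k) * (∑' k, N k * X k ^ 2) := by
  have hrp : ∀ y : ℝ≥0∞, (y ^ ((2:ℝ)⁻¹)) ^ (2:ℕ) = y := by
    intro y
    rw [← ENNReal.rpow_natCast (y ^ ((2:ℝ)⁻¹)) 2, ← ENNReal.rpow_mul]
    norm_num
  have hpq : Real.HolderConjugate 2 2 := Real.holderConjugate_iff.mpr ⟨one_lt_two, by norm_num⟩
  have hH := ENNReal.lintegral_mul_le_Lp_mul_Lq (Measure.count (α := ℕ)) hpq
    (f := fun k => N k ^ ((2:ℝ)⁻¹)) (g := fun k => N k ^ ((2:ℝ)⁻¹) * X k)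
    (measurable_of_countable _).aemeasurable (measurable_of_countable _).aemeasurable
  simp only [Pi.mul_apply] at hH
  rw [lintegral_count, lintegral_count, lintegral_count] at hH
  have key : ∀ k, N k ^ ((2:ℝ)⁻¹) * (N k ^ ((2:ℝ)⁻¹) * X k) = N k * X k := by
    intro k
    rw [← mul_assoc, ← sq, hrp (N k)]
  have key2 : ∀ k, (N k ^ ((2:ℝ)⁻¹)) ^ (2:ℝ) = N k := by
    intro k
    rw [← ENNReal.rpow_mul]
    norm_num
  have key3 : ∀ k, (N k ^ ((2:ℝ)⁻¹) * X k) ^ (2:ℝ) = N k * X k ^ 2 := by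
    intro k
    rw [ENNReal.mul_rpow_of_nonneg _ _ (by norm_num : (0:ℝ) ≤ 2), key2 k,
      ← ENNReal.rpow_natCast (X k) 2]
    norm_num
  rw [tsum_congr key, tsum_congr key2, tsum_congr key3] at hH
  calc (∑' k, N k * X k) ^ 2
      ≤ ((∑' k, N k) ^ ((2:ℝ)⁻¹) * (∑' k, N k * X k ^ 2) ^ ((2:ℝ)⁻¹)) ^ (2:ℕ) := by
        refine pow_le_pow_left' ?_ 2
        simpa [one_div] using hH
    _ = (∑' k, N k) * (∑' k, N k * X k ^ 2) := by
        rw [mul_pow, hrp, hrp]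

lemma ofReal_norm_tsum_le (f : ℕ → ℂ) :
    ENNReal.ofReal ‖∑' k, f k‖ ≤ ∑' k, ENNReal.ofReal ‖f k‖ := by
  by_cases h : Summable f
  · have hn : Summable fun k => ‖f k‖ := by
      rwa [summable_norm_iff]
    calc ENNReal.ofReal ‖∑' k, f k‖ ≤ ENNReal.ofReal (∑' k, ‖f k‖) :=
          ENNReal.ofReal_le_ofReal (norm_tsum_le_tsum_norm hn)
      _ = ∑' k, ENNReal.ofReal ‖f k‖ :=
          ENNReal.ofReal_tsum_of_nonneg (fun k => norm_nonneg _) hn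
  · rw [tsum_eq_zero_of_not_summable h]
    simp

lemma ofReal_norm_sq_eq (y : lp (fun _ : ℕ => ℂ) 2) :
    ENNReal.ofReal (‖y‖ ^ 2) = ∑' j, (ENNReal.ofReal ‖(y : ∀ _ : ℕ, ℂ) j‖) ^ 2 := by
  have h2 : (0:ℝ) < (2:ℝ≥0∞).toReal := by norm_num
  have hn := lp.norm_rpow_eq_tsum h2 y
  have hs : Summable fun j => ‖(y : ∀ _ : ℕ, ℂ) j‖ ^ (2:ℝ≥0∞).toReal :=
    ((lp.memℓp y).summable h2)
  rw [ENNReal.toReal_ofNat] at hn hs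
  have hy2 : ‖y‖ ^ (2:ℕ) = ‖y‖ ^ (2:ℝ) := by
    rw [← Real.rpow_natCast ‖y‖ 2]
    norm_num
  rw [hy2, hn]
  rw [ENNReal.ofReal_tsum_of_nonneg (fun j => Real.rpow_nonneg (norm_nonneg _) _)
    (by simpa using hs)]
  refine tsum_congr fun j => ?_
  rw [← ENNReal.ofReal_rpow_of_nonneg (norm_nonneg _) (by norm_num : (0:ℝ) ≤ 2),
    ← ENNReal.rpow_natCast (ENNReal.ofReal ‖(y : ∀ _ : ℕ, ℂ) j‖) 2]
  norm_num


def Tf (m : ℕ) : ℝ≥0∞ :=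
  ⨆ j : ℕ, ⨆ _ : m ≤ j, ∑' k : {k : ℕ // m ≤ k}, ENNReal.ofReal ‖a j k.1‖

include hherm in
lemma schur {m p q : ℕ} (hp : m ≤ p) (hq : m ≤ q) (hfin : Tf a m ≠ ⊤) :
    ‖opA a hrow q - opA a hrow p‖ ≤ (Tf a m).toReal := by
  refine ContinuousLinearMap.opNorm_le_bound _ ENNReal.toReal_nonneg fun x => ?_
  set c : ℕ → ℕ → ℂ := fun k j => bmat a q k j - bmat a p k j with hc
  set N : ℕ → ℕ → ℝ≥0∞ := fun k j => ENNReal.ofReal ‖c k j‖ with hN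
  set X : ℕ → ℝ≥0∞ := fun k => ENNReal.ofReal ‖(x : ∀ _ : ℕ, ℂ) k‖ with hX
  have hnorm_a : ∀ k j, ‖a k j‖ = ‖a j k‖ := fun k j => by
    rw [hherm k j]; exact (RCLike.norm_conj _).symm
  have hc_cases : ∀ k j, c k j = 0 ∨ c k j = a k j ∨ c k j = -a k j := by
    intro k j
    rw [hc]; simp only [bmat]
    split_ifs <;> simp
  have hc_norm : ∀ k j, ‖c k j‖ ≤ ‖a k j‖ := by
    intro k j
    rcases hc_cases k j with h | h | h <;> rw [h] <;> simp
  have hc_zero : ∀ k j, k < m ∨ j < m → c k j = 0 := by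
    intro k j hkj
    have h1 : k < p ∨ j < p :=
      hkj.imp (fun h => lt_of_lt_of_le h hp) fun h => lt_of_lt_of_le h hp
    have h2 : k < q ∨ j < q :=
      hkj.imp (fun h => lt_of_lt_of_le h hq) fun h => lt_of_lt_of_le h hq
    rw [hc]; simp only [bmat]
    rw [if_pos h2, if_pos h1, sub_self]
  have hN_symm : ∀ k j, N k j = N j k := by
    intro k j
    rw [hN]; simp only
    congr 1
    rw [hc]; simp only [bmat]
    by_cases hA : k < q ∨ j < q <;> by_cases hB : k < p ∨ j < p
    · rw [if_pos hA, if_pos hB, if_pos (Or.symm hA), if_pos (Or.symm hB)]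
      rw [sub_self, sub_self]
    · rw [if_pos hA, if_neg hB, if_pos (Or.symm hA),
        if_neg fun h => hB (Or.symm h), sub_zero, sub_zero]
      exact hnorm_a k j
    · rw [if_neg hA, if_pos hB, if_neg (fun h => hA (Or.symm h)), if_pos (Or.symm hB),
        zero_sub, zero_sub, norm_neg, norm_neg]
      exact hnorm_a k j
    · rw [if_neg hA, if_neg hB, if_neg (fun h => hA (Or.symm h)),
        if_neg fun h => hB (Or.symm h)]
  have hrowb : ∀ j, (∑' k, N k j) ≤ Tf a m := by
    intro j
    by_cases hj : m ≤ j
    · calc (∑' k, N k j)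
          ≤ ∑' k, Set.indicator {k : ℕ | m ≤ k} (fun k => ENNReal.ofReal ‖a j k‖) k := by
            refine ENNReal.tsum_le_tsum fun k => ?_
            by_cases hk : m ≤ k
            · rw [Set.indicator_of_mem (show k ∈ {k : ℕ | m ≤ k} from hk)]
              refine ENNReal.ofReal_le_ofReal ?_
              exact le_trans (hc_norm k j) (le_of_eq (hnorm_a k j))
            · rw [hN]; simp only
              rw [hc_zero k j (Or.inl (not_le.mp hk))]
              simp
        _ = ∑' k : {k : ℕ // m ≤ k}, ENNReal.ofReal ‖a j k.1‖ :=
            (tsum_subtype {k : ℕ | m ≤ k} fun k => ENNReal.ofReal ‖a j k‖).symm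
        _ ≤ Tf a m :=
            le_iSup₂ (f := fun j' (_ : m ≤ j') =>
              ∑' k : {k : ℕ // m ≤ k}, ENNReal.ofReal ‖a j' k.1‖) j hj
    · have hz : ∀ k, N k j = 0 := by
        intro k
        rw [hN]; simp only
        rw [hc_zero k j (Or.inr (not_le.mp hj))]
        simp
      rw [tsum_congr hz]
      simp
  have hΔ : ∀ j, ((opA a hrow q - opA a hrow p) x : ∀ _ : ℕ, ℂ) j = ∑' k, c k j * x k := by
    intro j
    rw [ContinuousLinearMap.sub_apply, lp.coeFn_sub, Pi.sub_apply,
      opA_apply a hherm hrow q x j, opA_apply a hherm hrow p x j,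
      ← Summable.tsum_sub (summable_bmul a hherm hrow q j x) (summable_bmul a hherm hrow p j x)]
    refine tsum_congr fun k => ?_
    rw [hc]; simp only
    ring
  have key : ENNReal.ofReal (‖(opA a hrow q - opA a hrow p) x‖ ^ 2)
      ≤ (Tf a m * ENNReal.ofReal ‖x‖) ^ 2 := by
    rw [ofReal_norm_sq_eq]
    calc (∑' j, (ENNReal.ofReal ‖((opA a hrow q - opA a hrow p) x : ∀ _ : ℕ, ℂ) j‖) ^ 2)
        ≤ ∑' j, (∑' k, N k j * X k) ^ 2 := by
          refine ENNReal.tsum_le_tsum fun j => ?_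
          refine pow_le_pow_left' ?_ 2
          rw [hΔ j]
          refine le_trans (ofReal_norm_tsum_le _) ?_
          refine le_of_eq (tsum_congr fun k => ?_)
          rw [norm_mul, ENNReal.ofReal_mul (norm_nonneg _)]
      _ ≤ ∑' j, Tf a m * (∑' k, N k j * X k ^ 2) := by
          refine ENNReal.tsum_le_tsum fun j => ?_
          refine le_trans (ennreal_cs (fun k => N k j) X) ?_
          exact mul_le_mul_left (hrowb j) _
      _ = Tf a m * ∑' k, ∑' j, N k j * X k ^ 2 := by
          rw [ENNReal.tsum_mul_left]
          congr 1
          exact ENNReal.tsum_comm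
      _ = Tf a m * ∑' k, (∑' j, N k j) * X k ^ 2 := by
          congr 1
          exact tsum_congr fun k => ENNReal.tsum_mul_right
      _ ≤ Tf a m * ∑' k, Tf a m * X k ^ 2 := by
          refine mul_le_mul_right (ENNReal.tsum_le_tsum fun k => ?_) _
          refine mul_le_mul_left ?_ _
          rw [tsum_congr fun j => hN_symm k j]
          exact hrowb k
      _ = (Tf a m * ENNReal.ofReal ‖x‖) ^ 2 := by
          have h1 : (∑' k, X k ^ 2) = ENNReal.ofReal ‖x‖ ^ 2 := by
            rw [← ENNReal.ofReal_pow (norm_nonneg _), ofReal_norm_sq_eq x]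
          rw [ENNReal.tsum_mul_left, h1, mul_pow]
          ring
  have hsqrt : ∀ u v : ℝ≥0∞, u ^ 2 ≤ v ^ 2 → u ≤ v := by
    intro u v h
    have h2 := ENNReal.rpow_le_rpow
      (x := u ^ (2:ℕ)) (y := v ^ (2:ℕ)) h (by norm_num : (0:ℝ) ≤ 2⁻¹)
    rw [← ENNReal.rpow_natCast u 2, ← ENNReal.rpow_natCast v 2,
      ← ENNReal.rpow_mul, ← ENNReal.rpow_mul] at h2
    norm_num at h2
    exact h2
  have h2 : ENNReal.ofReal ‖(opA a hrow q - opA a hrow p) x‖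
      ≤ Tf a m * ENNReal.ofReal ‖x‖ := by
    refine hsqrt _ _ ?_
    rw [← ENNReal.ofReal_pow (norm_nonneg _)]
    exact key
  calc ‖(opA a hrow q - opA a hrow p) x‖
      = (ENNReal.ofReal ‖(opA a hrow q - opA a hrow p) x‖).toReal :=
        (ENNReal.toReal_ofReal (norm_nonneg _)).symm
    _ ≤ (Tf a m * ENNReal.ofReal ‖x‖).toReal :=
        ENNReal.toReal_mono (ENNReal.mul_ne_top hfin ENNReal.ofReal_ne_top) h2
    _ = (Tf a m).toReal * ‖x‖ := by
        rw [ENNReal.toReal_mul, ENNReal.toReal_ofReal (norm_nonneg _)]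
end Stmt12

/-- Let `(a_{kj})` be an infinite hermitian matrix whose columns are
square-summable and which satisfies `lim_{m→∞} sup_{j≥m} ∑_{k≥m} |a_{jk}| = 0`. Then
`(a_{kj})` defines a compact self-adjoint operator on `ℓ²(ℕ)`. -/
theorem statement_12 (a : ℕ → ℕ → ℂ)
    (hherm : ∀ k j, a j k = (starRingEnd ℂ) (a k j))
    (hcol : ∀ j, Summable fun k => ‖a k j‖ ^ 2)
    (htail : Tendsto
      (fun m : ℕ => ⨆ j : ℕ, ⨆ _ : m ≤ j, ∑' k : {k : ℕ // m ≤ k}, ENNReal.ofReal ‖a j k.1‖)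
      atTop (nhds 0)) :
    ∃ A : ell2 →L[ℂ] ell2, IsCompactOperator A ∧ IsSelfAdjoint A ∧
      ∀ k j : ℕ, A (stdBasis k) j = a k j := by
  classical
  have hrow : ∀ j, Memℓp (fun k => a j k) 2 := by
    intro j
    refine memℓp_gen ?_
    refine (hcol j).congr fun k => ?_
    rw [show ‖a j k‖ = ‖a k j‖ from by rw [hherm k j, RCLike.norm_conj],
      ENNReal.toReal_ofNat, ← Real.rpow_natCast ‖a k j‖ 2]
    norm_num
  have htail' : Tendsto (Stmt12.Tf a) atTop (nhds 0) := htail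
  obtain ⟨m₀, hm₀⟩ := eventually_atTop.mp
    (htail'.eventually (gt_mem_nhds (by norm_num : (0:ℝ≥0∞) < 1)))
  set A' : ℕ → ell2 →L[ℂ] ell2 := fun n => Stmt12.opA a hrow (n + m₀) with hA'
  have hcauchy : CauchySeq A' := by
    refine cauchySeq_of_le_tendsto_0 (fun N => (Stmt12.Tf a (N + m₀)).toReal) ?_ ?_
    · intro n n' N hn hn'
      rw [dist_eq_norm]
      exact Stmt12.schur a hherm hrow (Nat.add_le_add_right hn' m₀) (Nat.add_le_add_right hn m₀)
        ((hm₀ (N + m₀) (Nat.le_add_left _ _)).ne_top)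
    · have h1 : Tendsto (fun N => Stmt12.Tf a (N + m₀)) atTop (nhds 0) :=
        htail'.comp (tendsto_add_atTop_nat m₀)
      have h2 := (ENNReal.tendsto_toReal (a := 0) (by simp)).comp h1
      simpa [Function.comp_def] using h2
  obtain ⟨A, hA⟩ := cauchySeq_tendsto_of_complete hcauchy
  refine ⟨A, ?_, ?_, ?_⟩
  · exact isCompactOperator_of_tendsto hA
      (Filter.Eventually.of_forall fun n => Stmt12.opA_compact a hrow _)
  · have hsa : ∀ n, star (A' n) = A' n := fun n => Stmt12.opA_selfAdjoint a hherm hrow (n + m₀)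
    have h1 : Tendsto (fun n => ContinuousLinearMap.adjoint (A' n)) atTop
        (nhds (ContinuousLinearMap.adjoint A)) :=
      ((LinearIsometryEquiv.continuous ContinuousLinearMap.adjoint).tendsto A).comp hA
    have h2 : (fun n => ContinuousLinearMap.adjoint (A' n)) = A' := funext fun n => by
      rw [← ContinuousLinearMap.star_eq_adjoint, hsa n]
    rw [IsSelfAdjoint, ContinuousLinearMap.star_eq_adjoint]
    exact tendsto_nhds_unique (h2 ▸ h1) hA
  · intro k j
    have hcont2 : Tendsto (fun n => (A' n (stdBasis k) : ∀ _ : ℕ, ℂ) j) atTop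
        (nhds ((A (stdBasis k) : ∀ _ : ℕ, ℂ) j)) := by
      have happly : Tendsto (fun n => A' n (stdBasis k)) atTop (nhds (A (stdBasis k))) := by
        have := ((ContinuousLinearMap.apply ℂ ell2 (stdBasis k)).continuous.tendsto A).comp hA
        simpa [Function.comp_def] using this
      have hco := ((innerSL ℂ (stdBasis j)).continuous.tendsto (A (stdBasis k))).comp happly
      simpa [Function.comp_def, Stmt12.inner_stdBasis_left] using hco
    have hconst : Tendsto (fun n => (A' n (stdBasis k) : ∀ _ : ℕ, ℂ) j) atTop (nhds (a k j)) := by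
      refine Tendsto.congr' ?_ tendsto_const_nhds
      filter_upwards [eventually_gt_atTop k] with n hn
      rw [hA']; simp only
      rw [Stmt12.opA_entry a hherm hrow (n + m₀) k j, Stmt12.bmat,
        if_pos (Or.inl (lt_of_lt_of_le hn (Nat.le_add_right n m₀)))]
    exact tendsto_nhds_unique hcont2 hconst
end
end

section
/- Let X = {x_k}_{k≥1} be a sequence of pairwise distinct points of ℝ³ such that K := sup_{j∈ℕ} Σ_{k≠j} 1/|x_k − x_j| < ∞, and let r > 0. Consider the matrix Ω_3(r, X) := ( sin(r|x_k − x_j|)/(r|x_k − x_j|) )_{k,j∈ℕ}, where the diagonal entries are taken to be 1. If K/r < 1, then this matrix defines a bounded self-adjoint operator A on ℓ²(ℕ) which has a bounded inverse, and moreover ‖A‖ ≤ 1 + K/r and ‖A^{−1}‖ ≤ (1 − K/r)^{−1}. -/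
open MeasureTheory Filter
open scoped ComplexOrder ENNReal RealInnerProductSpace

noncomputable section

private lemma tsum_cs {u v : ℕ → ℝ} (hu : ∀ k, 0 ≤ u k) (hv : ∀ k, 0 ≤ v k)
    (hsu : Summable u) (hsv : Summable fun k => u k * v k ^ 2) :
    Summable (fun k => u k * v k) ∧
      (∑' k, u k * v k) ^ 2 ≤ (∑' k, u k) * ∑' k, u k * v k ^ 2 := by
  have huv : Summable fun k => u k * v k := by
    refine Summable.of_nonneg_of_le (fun k => mul_nonneg (hu k) (hv k)) (fun k => ?_)
      ((hsu.add hsv).mul_left (1 / 2))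
    have h := mul_nonneg (hu k) (sq_nonneg (1 - v k))
    nlinarith
  refine ⟨huv, ?_⟩
  have hRHS : 0 ≤ (∑' k, u k) * ∑' k, u k * v k ^ 2 :=
    mul_nonneg (tsum_nonneg hu) (tsum_nonneg fun k => mul_nonneg (hu k) (sq_nonneg _))
  have key : ∀ s : Finset ℕ, ∑ k ∈ s, u k * v k ≤
      Real.sqrt ((∑' k, u k) * ∑' k, u k * v k ^ 2) := by
    intro s
    have h1 : (∑ k ∈ s, u k * v k) ^ 2 ≤ (∑ k ∈ s, u k) * ∑ k ∈ s, u k * v k ^ 2 :=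
      Finset.sum_sq_le_sum_mul_sum_of_sq_eq_mul s (fun k _ => hu k)
        (fun k _ => mul_nonneg (hu k) (sq_nonneg _)) (fun k _ => by ring)
    have h2 : (∑ k ∈ s, u k * v k) ^ 2 ≤ (∑' k, u k) * ∑' k, u k * v k ^ 2 :=
      h1.trans (mul_le_mul (Summable.sum_le_tsum s (fun k _ => hu k) hsu)
        (Summable.sum_le_tsum s (fun k _ => mul_nonneg (hu k) (sq_nonneg _)) hsv)
        (Finset.sum_nonneg fun k _ => mul_nonneg (hu k) (sq_nonneg _)) (tsum_nonneg hu))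
    have h3 : 0 ≤ ∑ k ∈ s, u k * v k := Finset.sum_nonneg fun k _ => mul_nonneg (hu k) (hv k)
    calc ∑ k ∈ s, u k * v k = Real.sqrt ((∑ k ∈ s, u k * v k) ^ 2) := (Real.sqrt_sq h3).symm
      _ ≤ _ := Real.sqrt_le_sqrt h2
  have h4 : ∑' k, u k * v k ≤ Real.sqrt ((∑' k, u k) * ∑' k, u k * v k ^ 2) :=
    Summable.tsum_le_of_sum_le huv key
  calc (∑' k, u k * v k) ^ 2 ≤ (Real.sqrt ((∑' k, u k) * ∑' k, u k * v k ^ 2)) ^ 2 :=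
        pow_le_pow_left₀ (tsum_nonneg fun k => mul_nonneg (hu k) (hv k)) h4 2
    _ = _ := Real.sq_sqrt hRHS

private lemma norm_sq_summable (x : ell2) : Summable fun k => ‖x k‖ ^ 2 := by
  have h := (lp.memℓp x).summable (p := 2) (by norm_num)
  have h2 : ((2 : ℝ≥0∞).toReal) = (2 : ℝ) := by norm_num
  simp only [h2] at h
  refine h.congr fun k => ?_
  rw [show ((2:ℝ)) = ((2:ℕ):ℝ) by norm_num, Real.rpow_natCast]

private lemma norm_sq_tsum (x : ell2) : ∑' k, ‖x k‖ ^ 2 = ‖x‖ ^ 2 := by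
  have h := lp.norm_rpow_eq_tsum (p := 2) (by norm_num) x
  have h2 : ((2 : ℝ≥0∞).toReal) = (2 : ℝ) := by norm_num
  simp only [h2] at h
  rw [show ((2:ℝ)) = ((2:ℕ):ℝ) by norm_num, Real.rpow_natCast] at h
  simp only [Real.rpow_natCast] at h
  exact h.symm

private lemma prod_summable {w : ℕ → ℕ → ℝ} {α : ℝ} (hw0 : ∀ k j, 0 ≤ w k j)
    (hwsymm : ∀ k j, w k j = w j k)
    (hwsum : ∀ j, Summable fun k => w k j) (hwle : ∀ j, ∑' k, w k j ≤ α) (x : ell2) :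
    Summable (fun p : ℕ × ℕ => w p.1 p.2 * ‖x p.1‖ ^ 2) := by
  have hwsum' : ∀ k, Summable fun j => w k j :=
    fun k => (hwsum k).congr fun j => (hwsymm j k)
  have hwle' : ∀ k, ∑' j, w k j ≤ α := by
    intro k
    rw [tsum_congr fun j => hwsymm k j]
    exact hwle k
  refine (summable_prod_of_nonneg fun p => mul_nonneg (hw0 _ _) (sq_nonneg _)).mpr
    ⟨fun k => Summable.mul_right (‖x k‖ ^ 2) (hwsum' k), ?_⟩
  refine Summable.of_nonneg_of_le
    (fun k => tsum_nonneg fun j => mul_nonneg (hw0 _ _) (sq_nonneg _)) (fun k => ?_)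
    ((norm_sq_summable x).mul_left α)
  show ∑' j, w k j * ‖x k‖ ^ 2 ≤ α * ‖x k‖ ^ 2
  rw [tsum_mul_right]
  exact mul_le_mul_of_nonneg_right (hwle' k) (sq_nonneg _)

private lemma row_summable {e w : ℕ → ℕ → ℝ} (hw0 : ∀ k j, 0 ≤ w k j)
    (hew : ∀ k j, |e k j| ≤ w k j)
    (hwsum : ∀ j, Summable fun k => w k j) (x : ell2) (c : ℕ → ℂ)
    (hc : ∀ k, ‖c k‖ ≤ ‖x k‖) (j : ℕ) :
    Summable fun k => ‖(e k j : ℂ) * c k‖ := by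
  refine Summable.of_nonneg_of_le (fun k => norm_nonneg _) (fun k => ?_)
    (Summable.mul_right ‖x‖ (hwsum j))
  rw [norm_mul, Complex.norm_real, Real.norm_eq_abs]
  exact mul_le_mul (hew k j) ((hc k).trans (lp.norm_apply_le_norm two_ne_zero x k))
    (norm_nonneg _) (hw0 k j)

private lemma main_estimate {e w : ℕ → ℕ → ℝ} {α : ℝ} (hα0 : 0 ≤ α) (hw0 : ∀ k j, 0 ≤ w k j)
    (hew : ∀ k j, |e k j| ≤ w k j) (hwsymm : ∀ k j, w k j = w j k)
    (hwsum : ∀ j, Summable fun k => w k j) (hwle : ∀ j, ∑' k, w k j ≤ α) (x : ell2) :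
    Summable (fun j => ‖∑' k, (e k j : ℂ) * x k‖ ^ 2) ∧
      ∑' j, ‖∑' k, (e k j : ℂ) * x k‖ ^ 2 ≤ (α * ‖x‖) ^ 2 := by
  have hS0 : ∀ j, (0:ℝ) ≤ ∑' k, w k j * ‖x k‖ ^ 2 :=
    fun j => tsum_nonneg fun k => mul_nonneg (hw0 _ _) (sq_nonneg _)
  have hSrow : ∀ j, Summable fun k => w k j * ‖x k‖ ^ 2 := by
    intro j
    refine Summable.of_nonneg_of_le (fun k => mul_nonneg (hw0 _ _) (sq_nonneg _))
      (fun k => ?_) (Summable.mul_right (‖x‖ ^ 2) (hwsum j))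
    refine mul_le_mul_of_nonneg_left ?_ (hw0 _ _)
    exact pow_le_pow_left₀ (norm_nonneg _) (lp.norm_apply_le_norm two_ne_zero x k) 2
  have hLj : ∀ j, ‖∑' k, (e k j : ℂ) * x k‖ ^ 2 ≤ α * ∑' k, w k j * ‖x k‖ ^ 2 := by
    intro j
    have hcs := tsum_cs (fun k => hw0 k j) (fun k => norm_nonneg (x k)) (hwsum j) (hSrow j)
    have h1 : ‖∑' k, (e k j : ℂ) * x k‖ ≤ ∑' k, w k j * ‖x k‖ := by
      refine (norm_tsum_le_tsum_norm (row_summable hw0 hew hwsum x _ (fun k => le_refl _) j)).trans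
        (Summable.tsum_le_tsum (fun k => ?_) (row_summable hw0 hew hwsum x _ (fun k => le_refl _) j) hcs.1)
      rw [norm_mul, Complex.norm_real, Real.norm_eq_abs]
      exact mul_le_mul_of_nonneg_right (hew k j) (norm_nonneg _)
    have h2 : ‖∑' k, (e k j : ℂ) * x k‖ ^ 2 ≤ (∑' k, w k j * ‖x k‖) ^ 2 :=
      pow_le_pow_left₀ (norm_nonneg _) h1 2
    refine h2.trans (hcs.2.trans ?_)
    exact mul_le_mul_of_nonneg_right (hwle j) (hS0 j)
  have hF := prod_summable (α := α) hw0 hwsymm hwsum hwle x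
  have hSsummable : Summable fun j => ∑' k, w k j * ‖x k‖ ^ 2 :=
    ((summable_prod_of_nonneg fun p : ℕ × ℕ =>
      mul_nonneg (hw0 p.2 p.1) (sq_nonneg ‖x p.2‖)).mp hF.prod_symm).2
  have hStsum : ∑' j, ∑' k, w k j * ‖x k‖ ^ 2 ≤ α * ‖x‖ ^ 2 := by
    have hcomm : ∑' j, ∑' k, w k j * ‖x k‖ ^ 2 = ∑' k, ∑' j, w k j * ‖x k‖ ^ 2 :=
      Summable.tsum_comm (f := fun k j => w k j * ‖x k‖ ^ 2) hF
    rw [hcomm]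
    calc ∑' k, ∑' j, w k j * ‖x k‖ ^ 2 = ∑' k, (∑' j, w k j) * ‖x k‖ ^ 2 :=
          tsum_congr fun k => tsum_mul_right
      _ ≤ ∑' k, α * ‖x k‖ ^ 2 := by
          refine Summable.tsum_le_tsum (fun k => ?_) ?_ ((norm_sq_summable x).mul_left α)
          · refine mul_le_mul_of_nonneg_right ?_ (sq_nonneg _)
            rw [tsum_congr fun j => hwsymm k j]
            exact hwle k
          · have h5 : Summable fun k => ∑' j, w k j * ‖x k‖ ^ 2 :=
              ((summable_prod_of_nonneg fun p : ℕ × ℕ =>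
                mul_nonneg (hw0 p.1 p.2) (sq_nonneg ‖x p.1‖)).mp hF).2
            exact h5.congr fun k => tsum_mul_right
      _ = α * ∑' k, ‖x k‖ ^ 2 := tsum_mul_left
      _ = α * ‖x‖ ^ 2 := by rw [norm_sq_tsum]
  have hLsum : Summable fun j => ‖∑' k, (e k j : ℂ) * x k‖ ^ 2 :=
    Summable.of_nonneg_of_le (fun j => sq_nonneg _) hLj (hSsummable.mul_left α)
  refine ⟨hLsum, ?_⟩
  calc ∑' j, ‖∑' k, (e k j : ℂ) * x k‖ ^ 2 ≤ ∑' j, α * ∑' k, w k j * ‖x k‖ ^ 2 :=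
        Summable.tsum_le_tsum hLj hLsum (hSsummable.mul_left α)
    _ = α * ∑' j, ∑' k, w k j * ‖x k‖ ^ 2 := tsum_mul_left
    _ ≤ α * (α * ‖x‖ ^ 2) := mul_le_mul_of_nonneg_left hStsum hα0
    _ = (α * ‖x‖) ^ 2 := by ring

private lemma matrix_op {e w : ℕ → ℕ → ℝ} {α : ℝ} (hα0 : 0 ≤ α) (hw0 : ∀ k j, 0 ≤ w k j)
    (hew : ∀ k j, |e k j| ≤ w k j) (hesymm : ∀ k j, e k j = e j k)
    (hwsymm : ∀ k j, w k j = w j k)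
    (hwsum : ∀ j, Summable fun k => w k j) (hwle : ∀ j, ∑' k, w k j ≤ α) :
    ∃ T : ell2 →L[ℂ] ell2, ‖T‖ ≤ α ∧ (∀ (x : ell2) (j : ℕ), T x j = ∑' k, (e k j : ℂ) * x k) ∧
      ∀ x y : ell2, inner (𝕜 := ℂ) (T x) y = inner (𝕜 := ℂ) x (T y) := by
  -- summability of rows (as complex series)
  have hrow : ∀ (x : ell2) (c : ℕ → ℂ), (∀ k, ‖c k‖ ≤ ‖x k‖) → ∀ j,
      Summable fun k => (e k j : ℂ) * c k :=
    fun x c hc j => Summable.of_norm (row_summable hw0 hew hwsum x c hc j)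
  -- membership in ℓ²
  have hmem : ∀ x : ell2, Memℓp (fun j => ∑' k, (e k j : ℂ) * x k) 2 := by
    intro x
    apply memℓp_gen
    have h := (main_estimate hα0 hw0 hew hwsymm hwsum hwle x).1
    have h2 : ((2 : ℝ≥0∞).toReal) = (2 : ℝ) := by norm_num
    rw [h2]
    refine h.congr fun j => ?_
    rw [show ((2:ℝ)) = ((2:ℕ):ℝ) by norm_num, Real.rpow_natCast]
  -- the linear map
  set Lmap : ell2 →ₗ[ℂ] ell2 :=
    { toFun := fun x => ⟨fun j => ∑' k, (e k j : ℂ) * x k, hmem x⟩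
      map_add' := by
        intro x y
        apply Subtype.ext
        funext j
        show ∑' k, (e k j : ℂ) * (x + y) k = (∑' k, (e k j : ℂ) * x k) + ∑' k, (e k j : ℂ) * y k
        rw [← Summable.tsum_add (hrow x x (fun k => le_refl _) j) (hrow y y (fun k => le_refl _) j)]
        refine tsum_congr fun k => ?_
        rw [lp.coeFn_add, Pi.add_apply, mul_add]
      map_smul' := by
        intro c x
        apply Subtype.ext
        funext j
        show ∑' k, (e k j : ℂ) * (c • x) k = c • ∑' k, (e k j : ℂ) * x k
        rw [smul_eq_mul, ← tsum_mul_left]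
        refine tsum_congr fun k => ?_
        rw [lp.coeFn_smul, Pi.smul_apply, smul_eq_mul]
        ring } with hLmap
  have hLnorm : ∀ x : ell2, ‖Lmap x‖ ≤ α * ‖x‖ := by
    intro x
    refine lp.norm_le_of_tsum_le (by norm_num) (mul_nonneg hα0 (norm_nonneg x)) ?_
    have h := (main_estimate hα0 hw0 hew hwsymm hwsum hwle x).2
    have h2 : ((2 : ℝ≥0∞).toReal) = (2 : ℝ) := by norm_num
    rw [h2]
    have h3 : ∀ y : ℝ, 0 ≤ y → y ^ (2:ℝ) = y ^ (2:ℕ) := fun y hy => by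
      rw [show ((2:ℝ)) = ((2:ℕ):ℝ) by norm_num, Real.rpow_natCast]
    calc ∑' j, ‖(Lmap x) j‖ ^ (2:ℝ) = ∑' j, ‖(Lmap x) j‖ ^ (2:ℕ) :=
          tsum_congr fun j => h3 _ (norm_nonneg _)
      _ ≤ (α * ‖x‖) ^ (2:ℕ) := h
      _ = (α * ‖x‖) ^ (2:ℝ) := (h3 _ (mul_nonneg hα0 (norm_nonneg x))).symm
  refine ⟨LinearMap.mkContinuous Lmap α hLnorm, LinearMap.mkContinuous_norm_le _ hα0 _, ?_, ?_⟩
  · intro x j; rfl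
  · intro x y
    rw [lp.inner_eq_tsum, lp.inner_eq_tsum]
    simp only [RCLike.inner_apply]
    -- the double-sum function
    set G : ℕ → ℕ → ℂ := fun k j => (e k j : ℂ) * ((starRingEnd ℂ) (x k) * y j) with hG
    have hGsum : Summable (Function.uncurry G) := by
      refine Summable.of_norm ?_
      have hb : Summable (fun p : ℕ × ℕ =>
          (w p.1 p.2 * ‖x p.1‖ ^ 2 + w p.1 p.2 * ‖y p.2‖ ^ 2) / 2) := by
        refine Summable.div_const (Summable.add (prod_summable hw0 hwsymm hwsum hwle x) ?_) 2
        have h2 := (prod_summable hw0 hwsymm hwsum hwle y).prod_symm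
        refine h2.congr fun p => ?_
        show w p.2 p.1 * ‖y p.2‖ ^ 2 = w p.1 p.2 * ‖y p.2‖ ^ 2
        rw [hwsymm p.2 p.1]
      refine Summable.of_nonneg_of_le (fun p => norm_nonneg _) (fun p => ?_) hb
      show ‖G p.1 p.2‖ ≤ _
      rw [hG]
      simp only [norm_mul, Complex.norm_real, Real.norm_eq_abs, RCLike.norm_conj]
      have h1 : |e p.1 p.2| * (‖x p.1‖ * ‖y p.2‖) ≤ w p.1 p.2 * (‖x p.1‖ * ‖y p.2‖) :=
        mul_le_mul_of_nonneg_right (hew _ _) (mul_nonneg (norm_nonneg _) (norm_nonneg _))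
      refine h1.trans ?_
      have := hw0 p.1 p.2
      nlinarith [mul_nonneg (hw0 p.1 p.2) (sq_nonneg (‖x p.1‖ - ‖y p.2‖))]
    have hconjx : ∀ k, ‖(starRingEnd ℂ) (x k)‖ ≤ ‖x k‖ := fun k => le_of_eq (RCLike.norm_conj _)
    -- LHS = double sum (j outer)
    have hLHS : ∑' j, (starRingEnd ℂ) ((Lmap x) j) * y j = ∑' j, ∑' k, G k j := by
      refine tsum_congr fun j => ?_
      have h1 : (starRingEnd ℂ) ((Lmap x) j) = ∑' k, (e k j : ℂ) * (starRingEnd ℂ) (x k) := by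
        show (starRingEnd ℂ) (∑' k, (e k j : ℂ) * x k) = _
        rw [starRingEnd_apply, tsum_star]
        refine tsum_congr fun k => ?_
        rw [star_mul', ← starRingEnd_apply, ← starRingEnd_apply, Complex.conj_ofReal]
      rw [h1, ← tsum_mul_right]
      refine tsum_congr fun k => ?_
      simp only [hG]; ring
    -- RHS = double sum (k outer)
    have hRHS : ∑' k, (starRingEnd ℂ) (x k) * (Lmap y) k = ∑' k, ∑' j, G k j := by
      refine tsum_congr fun k => ?_
      have h1 : (starRingEnd ℂ) (x k) * (Lmap y) k
          = ∑' j, (starRingEnd ℂ) (x k) * ((e j k : ℂ) * y j) := (tsum_mul_left).symm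
      rw [h1]
      refine tsum_congr fun j => ?_
      simp only [hG]
      rw [hesymm k j]; ring
    show ∑' j, y j * (starRingEnd ℂ) ((Lmap x) j) = ∑' k, (Lmap y) k * (starRingEnd ℂ) (x k)
    simp only [mul_comm (y _), mul_comm ((Lmap y) _)]
    show ∑' j, (starRingEnd ℂ) ((Lmap x) j) * y j = ∑' k, (starRingEnd ℂ) (x k) * (Lmap y) k
    rw [hLHS, hRHS]
    exact Summable.tsum_comm (f := G) hGsum

/-- Let `X` be a sequence of pairwise distinct points of `ℝ³` with
`K := sup_j ∑_{k≠j} 1/|x_k − x_j| < ∞` and let `r > 0`. If `K/r < 1`, then the matrix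
`(sin(r|x_k−x_j|)/(r|x_k−x_j|))_{k,j}` (with diagonal entries `1`) defines a bounded
self-adjoint operator `A` on `ℓ²(ℕ)` with bounded inverse, and moreover `‖A‖ ≤ 1 + K/r`
and `‖A⁻¹‖ ≤ (1 − K/r)⁻¹`. -/
theorem statement_14 (X : ℕ → EuclideanSpace ℝ (Fin 3)) (hX : Function.Injective X)
    (hsum : ∀ j, Summable fun k => if k = j then (0 : ℝ) else (dist (X k) (X j))⁻¹)
    (K : ℝ) (hK : ∀ j, (∑' k, if k = j then (0 : ℝ) else (dist (X k) (X j))⁻¹) ≤ K)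
    (r : ℝ) (hr : 0 < r) (hKr : K / r < 1) :
    ∃ A : ell2 →L[ℂ] ell2, IsSelfAdjoint A ∧
      (∀ k j : ℕ, A (stdBasis k) j = (if k = j then (1 : ℝ) else
        Real.sin (r * dist (X k) (X j)) / (r * dist (X k) (X j)) : ℝ)) ∧
      ‖A‖ ≤ 1 + K / r ∧
      ∃ B : ell2 →L[ℂ] ell2, A.comp B = ContinuousLinearMap.id ℂ ell2 ∧
        B.comp A = ContinuousLinearMap.id ℂ ell2 ∧ ‖B‖ ≤ (1 - K / r)⁻¹ := by
  classical
  set α := K / r with hαdef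
  have hK0 : 0 ≤ K := le_trans (tsum_nonneg fun k => by positivity) (hK 0)
  have hα0 : 0 ≤ α := div_nonneg hK0 hr.le
  have hd : ∀ {k j : ℕ}, k ≠ j → 0 < dist (X k) (X j) :=
    fun {k j} hkj => dist_pos.mpr fun h => hkj (hX h)
  set e : ℕ → ℕ → ℝ := fun k j => if k = j then 0
    else Real.sin (r * dist (X k) (X j)) / (r * dist (X k) (X j)) with hedef
  set w : ℕ → ℕ → ℝ := fun k j => if k = j then 0 else (r * dist (X k) (X j))⁻¹ with hwdef
  have hw0 : ∀ k j, 0 ≤ w k j := by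
    intro k j
    simp only [hwdef]
    split
    · exact le_refl 0
    · next h => exact inv_nonneg.mpr (mul_nonneg hr.le dist_nonneg)
  have hew : ∀ k j, |e k j| ≤ w k j := by
    intro k j
    simp only [hedef, hwdef]
    split
    · simp
    · next h =>
      have hrd : 0 < r * dist (X k) (X j) := mul_pos hr (hd h)
      rw [abs_div, abs_of_pos hrd, div_le_iff₀ hrd, inv_mul_cancel₀ hrd.ne']
      exact Real.abs_sin_le_one _
  have hesymm : ∀ k j, e k j = e j k := by
    intro k j
    simp only [hedef, dist_comm (X k) (X j)]
    by_cases h : k = j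
    · subst h; simp
    · rw [if_neg h, if_neg (Ne.symm h), dist_comm]
  have hwsymm : ∀ k j, w k j = w j k := by
    intro k j
    simp only [hwdef]
    by_cases h : k = j
    · subst h; simp
    · rw [if_neg h, if_neg (Ne.symm h), dist_comm]
  have hwr : ∀ k j, w k j = r⁻¹ * (if k = j then (0:ℝ) else (dist (X k) (X j))⁻¹) := by
    intro k j
    simp only [hwdef]
    split
    · ring
    · rw [mul_inv]
  have hwsum : ∀ j, Summable fun k => w k j := by
    intro j
    refine ((hsum j).mul_left r⁻¹).congr fun k => (hwr k j).symm
  have hwle : ∀ j, ∑' k, w k j ≤ α := by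
    intro j
    have h1 : ∑' k, w k j = r⁻¹ * ∑' k, (if k = j then (0:ℝ) else (dist (X k) (X j))⁻¹) := by
      rw [← tsum_mul_left]
      exact tsum_congr fun k => hwr k j
    rw [h1, hαdef, div_eq_inv_mul]
    exact mul_le_mul_of_nonneg_left (hK j) (inv_nonneg.mpr hr.le)
  obtain ⟨T, hTnorm, hTapp, hTsym⟩ := matrix_op hα0 hw0 hew hesymm hwsymm hwsum hwle
  set A : ell2 →L[ℂ] ell2 := 1 + T with hAdef
  have hAapp : ∀ x : ell2, A x = x + T x := by
    intro x
    rw [hAdef]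
    simp
  -- entries
  have hentry : ∀ k j : ℕ, A (stdBasis k) j = (if k = j then (1 : ℝ) else
      Real.sin (r * dist (X k) (X j)) / (r * dist (X k) (X j)) : ℝ) := by
    intro k j
    have hT : T (stdBasis k) j = (e k j : ℂ) := by
      rw [hTapp]
      rw [tsum_eq_single k ?_]
      · have hz : (stdBasis k : ∀ _ : ℕ, ℂ) k = 1 := by
          simp [stdBasis, lp.single_apply]
        rw [hz, mul_one]
      · intro k' hk'
        have hz : (stdBasis k : ∀ _ : ℕ, ℂ) k' = 0 := by
          simp [stdBasis, lp.single_apply, hk']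
        rw [hz, mul_zero]
    have hcoe : (A (stdBasis k)) j = (stdBasis k) j + T (stdBasis k) j := by
      rw [hAapp, lp.coeFn_add, Pi.add_apply]
    rw [hcoe, hT]
    by_cases h : k = j
    · subst h
      have hz : (stdBasis k : ∀ _ : ℕ, ℂ) k = 1 := by
        simp [stdBasis, lp.single_apply]
      rw [hz]
      simp [hedef]
    · have hz : (stdBasis k : ∀ _ : ℕ, ℂ) j = 0 := by
        simp [stdBasis, lp.single_apply, Ne.symm h]
      rw [hz]
      simp only [hedef, if_neg h, zero_add]
  -- self-adjoint
  have hsa : IsSelfAdjoint A := by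
    refine LinearMap.IsSymmetric.isSelfAdjoint (A := A) ?_
    intro x y
    show inner (𝕜 := ℂ) (A x) y = inner (𝕜 := ℂ) x (A y)
    rw [hAapp, hAapp, inner_add_left, inner_add_right, hTsym x y]
  -- norm bound
  have hAnorm : ‖A‖ ≤ 1 + α := by
    rw [hAdef]
    refine (norm_add_le _ _).trans ?_
    have h1 : ‖(1 : ell2 →L[ℂ] ell2)‖ ≤ 1 := ContinuousLinearMap.norm_id_le
    linarith
  -- inverse
  have hTlt : ‖-T‖ < 1 := by
    rw [norm_neg]
    exact lt_of_le_of_lt hTnorm hKr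
  set u : (ell2 →L[ℂ] ell2)ˣ := Units.oneSub (-T) hTlt with hudef
  have hAu : (u : ell2 →L[ℂ] ell2) = A := by
    rw [hudef, Units.val_oneSub, sub_neg_eq_add, hAdef]
  refine ⟨A, hsa, hentry, hAnorm, ((u⁻¹ : (ell2 →L[ℂ] ell2)ˣ) : ell2 →L[ℂ] ell2),
    ?_, ?_, ?_⟩
  · rw [← ContinuousLinearMap.mul_def, ← hAu]
    rw [← ContinuousLinearMap.one_def]
    exact u.mul_inv
  · rw [← ContinuousLinearMap.mul_def, ← hAu]
    rw [← ContinuousLinearMap.one_def]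
    exact u.inv_mul
  · have hBval : ((u⁻¹ : (ell2 →L[ℂ] ell2)ˣ) : ell2 →L[ℂ] ell2) = ∑' n : ℕ, (-T) ^ n := rfl
    rw [hBval]
    have hgeom : HasSum (fun n : ℕ => α ^ n) (1 - α)⁻¹ :=
      hasSum_geometric_of_lt_one hα0 hKr
    refine tsum_of_norm_bounded hgeom ?_
    intro n
    cases n with
    | zero =>
      simp only [pow_zero]
      exact ContinuousLinearMap.norm_id_le
    | succ m =>
      refine (norm_pow_le' (-T) (Nat.succ_pos m)).trans ?_
      rw [norm_neg]
      exact pow_le_pow_left₀ (norm_nonneg _) hTnorm _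
end
end

section
/- Let X = {x_j}_{j≥1} be a sequence of pairwise distinct points of ℝ³ with d_*(X) = 0, and suppose the matrix 𝒯₁ := ( (1/2) e^{−|x_j − x_k|} )_{j,k∈ℕ} defines a bounded self-adjoint operator T₁ on ℓ²(ℕ). Then inf_{j≠k} ‖T₁(e_j − e_k)‖ = 0 while ‖e_j − e_k‖ = √2 for j ≠ k; in particular 0 belongs to the spectrum of T₁ and T₁ has no bounded inverse. -/
open MeasureTheory Filter
open scoped ComplexOrder ENNReal RealInnerProductSpace

noncomputable section

lemma l2_norm_le_of_pointwise (f g : ell2) (h : ∀ m, ‖f m‖ ≤ ‖g m‖) : ‖f‖ ≤ ‖g‖ := by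
  have hp : (0:ℝ) < (2:ℝ≥0∞).toReal := by norm_num
  rw [lp.norm_eq_tsum_rpow hp f, lp.norm_eq_tsum_rpow hp g]
  apply Real.rpow_le_rpow (tsum_nonneg fun i => Real.rpow_nonneg (norm_nonneg _) _)
  · exact Summable.tsum_le_tsum (fun m =>
      Real.rpow_le_rpow (norm_nonneg _) (h m) (by norm_num))
      (lp.hasSum_norm hp f).summable (lp.hasSum_norm hp g).summable
  · norm_num

lemma exp_diff_le (a b d : ℝ) (hab : |a - b| ≤ d) :
    |Real.exp (-a) - Real.exp (-b)| ≤ d * (Real.exp (-a) + Real.exp (-b)) := by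
  have key : ∀ x y : ℝ, y ≤ x →
      Real.exp (-y) - Real.exp (-x) ≤ (x - y) * (Real.exp (-x) + Real.exp (-y)) := by
    intro x y hyx
    have h3 : 1 - Real.exp (-(x - y)) ≤ x - y := by
      have := Real.add_one_le_exp (-(x - y)); linarith
    have h2 : Real.exp (-y) - Real.exp (-x) = Real.exp (-y) * (1 - Real.exp (-(x - y))) := by
      rw [mul_sub, mul_one, ← Real.exp_add]; ring_nf
    nlinarith [Real.exp_pos (-x), Real.exp_pos (-y)]
  rcases le_total a b with h | h
  · have hk := key b a h
    have hba : b - a ≤ d := by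
      have : b - a ≤ |a - b| := by rw [abs_sub_comm]; exact le_abs_self _
      linarith
    have hexp : Real.exp (-b) ≤ Real.exp (-a) := Real.exp_le_exp.2 (by linarith)
    rw [abs_of_nonneg (by linarith)]
    nlinarith [Real.exp_pos (-a), Real.exp_pos (-b)]
  · have hk := key a b h
    have hba : a - b ≤ d := (le_abs_self _).trans hab
    have hexp : Real.exp (-a) ≤ Real.exp (-b) := Real.exp_le_exp.2 (by linarith)
    rw [abs_of_nonpos (by linarith)]
    nlinarith [Real.exp_pos (-a), Real.exp_pos (-b)]

lemma norm_stdBasis (j : ℕ) : ‖stdBasis j‖ = 1 := by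
  have := lp.norm_single (E := fun _ : ℕ => ℂ) (p := 2) (by norm_num) j (1:ℂ)
  simpa [stdBasis] using this

/-- Let `X` be a sequence of pairwise distinct points of `ℝ³` with
`d_*(X) = 0`, and suppose the matrix `((1/2) e^{−|x_j−x_k|})_{j,k}` defines a bounded
self-adjoint operator `T₁` on `ℓ²(ℕ)`. Then `inf_{j≠k} ‖T₁(e_j − e_k)‖ = 0` while
`‖e_j − e_k‖ = √2` for `j ≠ k`; in particular `0 ∈ σ(T₁)`, so `T₁` has no bounded
inverse. -/
theorem statement_17 (X : ℕ → EuclideanSpace ℝ (Fin 3)) (hX : Function.Injective X)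
    (hd : ∀ ε : ℝ, 0 < ε → ∃ j k, j ≠ k ∧ dist (X j) (X k) < ε)
    (T₁ : ell2 →L[ℂ] ell2) (hsa : IsSelfAdjoint T₁)
    (hT : ∀ j k : ℕ, T₁ (stdBasis j) k = ((Real.exp (-dist (X j) (X k)) / 2 : ℝ) : ℂ)) :
    (∀ δ : ℝ, 0 < δ → ∃ j k, j ≠ k ∧ ‖T₁ (stdBasis j - stdBasis k)‖ < δ) ∧
    (∀ j k, j ≠ k → ‖stdBasis j - stdBasis k‖ = Real.sqrt 2) ∧
    (0 : ℂ) ∈ spectrum ℂ T₁ ∧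
    ¬ ∃ B : ell2 →L[ℂ] ell2, T₁.comp B = ContinuousLinearMap.id ℂ ell2 ∧
        B.comp T₁ = ContinuousLinearMap.id ℂ ell2 := by
  have key : ∀ j k : ℕ, ‖T₁ (stdBasis j - stdBasis k)‖ ≤ 2 * ‖T₁‖ * dist (X j) (X k) := by
    intro j k
    set d := dist (X j) (X k) with hdd
    have hd0 : 0 ≤ d := dist_nonneg
    have hpt : ∀ m : ℕ, ‖(T₁ (stdBasis j - stdBasis k)) m‖ ≤
        ‖(((d:ℂ)) • (T₁ (stdBasis j + stdBasis k))) m‖ := by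
      intro m
      have e1 : (T₁ (stdBasis j - stdBasis k)) m = T₁ (stdBasis j) m - T₁ (stdBasis k) m := by
        rw [map_sub, lp.coeFn_sub]; rfl
      have e2 : (T₁ (stdBasis j + stdBasis k)) m = T₁ (stdBasis j) m + T₁ (stdBasis k) m := by
        rw [map_add, lp.coeFn_add]; rfl
      rw [lp.coeFn_smul, Pi.smul_apply, e2, e1]
      simp only [hT]
      set a := dist (X j) (X m)
      set b := dist (X k) (X m)
      have habd : |a - b| ≤ d := abs_dist_sub_le (X j) (X k) (X m)
      have hexp := exp_diff_le a b d habd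
      have e3 : ((Real.exp (-a) / 2 : ℝ) : ℂ) - ((Real.exp (-b) / 2 : ℝ) : ℂ)
          = (((Real.exp (-a) - Real.exp (-b)) / 2 : ℝ) : ℂ) := by push_cast; ring
      have e4 : (d:ℂ) • (((Real.exp (-a) / 2 : ℝ) : ℂ) + ((Real.exp (-b) / 2 : ℝ) : ℂ))
          = ((d * ((Real.exp (-a) + Real.exp (-b)) / 2) : ℝ) : ℂ) := by
        rw [smul_eq_mul]; push_cast; ring
      rw [e3, e4, Complex.norm_real, Complex.norm_real, Real.norm_eq_abs, Real.norm_eq_abs]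
      rw [abs_div, abs_of_nonneg (by norm_num : (0:ℝ) ≤ 2)]
      have he : |d * ((Real.exp (-a) + Real.exp (-b)) / 2)|
          = d * (Real.exp (-a) + Real.exp (-b)) / 2 := by
        rw [abs_of_nonneg]; · ring
        positivity
      rw [he]
      linarith
    have h1 : ‖T₁ (stdBasis j - stdBasis k)‖ ≤ ‖((d:ℂ)) • (T₁ (stdBasis j + stdBasis k))‖ :=
      l2_norm_le_of_pointwise _ _ hpt
    have h2 : ‖((d:ℂ)) • (T₁ (stdBasis j + stdBasis k))‖
        = d * ‖T₁ (stdBasis j + stdBasis k)‖ := by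
      rw [norm_smul]; simp [abs_of_nonneg hd0]
    have h3 : ‖T₁ (stdBasis j + stdBasis k)‖ ≤ ‖T₁‖ * 2 := by
      calc ‖T₁ (stdBasis j + stdBasis k)‖ ≤ ‖T₁‖ * ‖stdBasis j + stdBasis k‖ :=
            T₁.le_opNorm _
        _ ≤ ‖T₁‖ * 2 := by
            have hb : ‖stdBasis j + stdBasis k‖ ≤ 2 := by
              calc ‖stdBasis j + stdBasis k‖ ≤ ‖stdBasis j‖ + ‖stdBasis k‖ := norm_add_le _ _
                _ = 2 := by rw [norm_stdBasis, norm_stdBasis]; norm_num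
            exact mul_le_mul_of_nonneg_left hb (norm_nonneg _)
    calc ‖T₁ (stdBasis j - stdBasis k)‖ ≤ d * ‖T₁ (stdBasis j + stdBasis k)‖ := h1.trans_eq h2
      _ ≤ d * (‖T₁‖ * 2) := mul_le_mul_of_nonneg_left h3 hd0
      _ = 2 * ‖T₁‖ * d := by ring
  have part1 : ∀ δ : ℝ, 0 < δ → ∃ j k, j ≠ k ∧ ‖T₁ (stdBasis j - stdBasis k)‖ < δ := by
    intro δ hδ
    have hN0 : (0:ℝ) < 2 * ‖T₁‖ + 1 := by linarith [norm_nonneg T₁]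
    obtain ⟨j, k, hjk, hdist⟩ := hd (δ / (2 * ‖T₁‖ + 1)) (div_pos hδ hN0)
    refine ⟨j, k, hjk, ?_⟩
    have h1 := key j k
    have hN : (0:ℝ) < 2 * ‖T₁‖ + 1 := hN0
    have h2 : 2 * ‖T₁‖ * dist (X j) (X k) < δ := by
      calc 2 * ‖T₁‖ * dist (X j) (X k) ≤ (2 * ‖T₁‖ + 1) * dist (X j) (X k) :=
            mul_le_mul_of_nonneg_right (by linarith) dist_nonneg
        _ < (2 * ‖T₁‖ + 1) * (δ / (2 * ‖T₁‖ + 1)) := mul_lt_mul_of_pos_left hdist hN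
        _ = δ := by rw [mul_comm]; exact div_mul_cancel₀ δ hN.ne'
    linarith
  have part2 : ∀ j k, j ≠ k → ‖stdBasis j - stdBasis k‖ = Real.sqrt 2 := by
    intro j k hjk
    have hco : (stdBasis k : ∀ _ : ℕ, ℂ) j = 0 := lp.single_apply_ne 2 k 1 hjk
    have hinner : (inner ℂ (stdBasis j) (stdBasis k) : ℂ) = 0 := by
      rw [stdBasis, lp.inner_single_left]
      show inner ℂ (1:ℂ) ((stdBasis k : ∀ _ : ℕ, ℂ) j) = 0
      rw [hco, inner_zero_right]
    have hsq : ‖stdBasis j - stdBasis k‖ ^ 2 = 2 := by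
      rw [@norm_sub_sq ℂ, hinner, norm_stdBasis, norm_stdBasis]
      simp
      norm_num
    have hnn := norm_nonneg (stdBasis j - stdBasis k)
    nlinarith [Real.sq_sqrt (by norm_num : (0:ℝ) ≤ 2), Real.sqrt_nonneg 2]
  have part4 : ¬ ∃ B : ell2 →L[ℂ] ell2, T₁.comp B = ContinuousLinearMap.id ℂ ell2 ∧
      B.comp T₁ = ContinuousLinearMap.id ℂ ell2 := by
    rintro ⟨B, _, hBT⟩
    have hs2 : (0:ℝ) < Real.sqrt 2 := Real.sqrt_pos.2 (by norm_num)
    have hB1 : (0:ℝ) < ‖B‖ + 1 := by linarith [norm_nonneg B]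
    obtain ⟨j, k, hjk, hsmall⟩ := part1 (Real.sqrt 2 / (‖B‖ + 1)) (div_pos hs2 hB1)
    have h1 : Real.sqrt 2 = ‖B (T₁ (stdBasis j - stdBasis k))‖ := by
      have hid : B (T₁ (stdBasis j - stdBasis k)) = stdBasis j - stdBasis k := by
        have := congrArg (fun f => f (stdBasis j - stdBasis k)) hBT
        simpa using this
      rw [hid, part2 j k hjk]
    have h2 : ‖B (T₁ (stdBasis j - stdBasis k))‖ ≤ (‖B‖ + 1) * ‖T₁ (stdBasis j - stdBasis k)‖ :=
      (B.le_opNorm _).trans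
        (mul_le_mul_of_nonneg_right (by linarith [norm_nonneg B]) (norm_nonneg _))
    have h4 : (‖B‖ + 1) * ‖T₁ (stdBasis j - stdBasis k)‖
        < (‖B‖ + 1) * (Real.sqrt 2 / (‖B‖ + 1)) := mul_lt_mul_of_pos_left hsmall hB1
    have h5 : (‖B‖ + 1) * (Real.sqrt 2 / (‖B‖ + 1)) = Real.sqrt 2 := by rw [mul_comm]; exact div_mul_cancel₀ _ hB1.ne'
    linarith
  have part3 : (0 : ℂ) ∈ spectrum ℂ T₁ := by
    rw [spectrum.mem_iff]
    intro hu
    simp only [map_zero, zero_sub] at hu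
    have hu' : IsUnit T₁ := by have h := hu.neg; rwa [neg_neg] at h
    obtain ⟨u, hu⟩ := hu'
    apply part4
    refine ⟨↑u⁻¹, ?_, ?_⟩
    · have h := u.mul_inv
      rw [hu, ContinuousLinearMap.mul_def, ContinuousLinearMap.one_def] at h
      exact h
    · have h := u.inv_mul
      rw [hu, ContinuousLinearMap.mul_def, ContinuousLinearMap.one_def] at h
      exact h
  exact ⟨part1, part2, part3, part4⟩
end
end
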